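/- arXiv:2102.09523 — 5 statements merged into one kernel-verified Lean document; each statement's English description precedes it below -/
import Mathlib

section
/- With U(x) = -2 log(1 + |x|²/8), the integral over ℝ² of log|z| · e^{U(z)} dz equals 12π log 2. -/
/-!
In polar coordinates the integral is `2π ∫₀^∞ r log r (1 + r²/8)⁻² dr`. The integrand has the
explicit primitive `G(r) = 4 r² log r / (8 + r²) - 2 log (1 + r²/8)`, which vanishes at `0` and
tends to `2 log 8 = 6 log 2` at infinity; its sign changes only at `r = 1`, so integrability on
`(0, 1]` and on `(1, ∞)` follows from monotonicity of `G` on each piece.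
-/

open MeasureTheory Real

noncomputable def lap2 (u : EuclideanSpace ℝ (Fin 2) → ℝ) (x : EuclideanSpace ℝ (Fin 2)) : ℝ :=
  ∑ i : Fin 2, fderiv ℝ (fun y => fderiv ℝ u y (EuclideanSpace.single i 1)) x (EuclideanSpace.single i 1)

noncomputable def U2 (x : EuclideanSpace ℝ (Fin 2)) : ℝ := -2 * Real.log (1 + ‖x‖^2 / 8)

open Set Filter Topology

theorem integral_comp_norm_euclideanSpace_fin_two {F : Type*} [NormedAddCommGroup F]
    [NormedSpace ℝ F] (f : ℝ → F) :
    ∫ z : EuclideanSpace ℝ (Fin 2), f ‖z‖ = (2 * π) • ∫ r in Ioi (0 : ℝ), r • f r := by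
  rw [integral_fun_norm_addHaar, finrank_euclideanSpace_fin, measureReal_def,
    EuclideanSpace.volume_ball_fin_two, mul_smul]
  simp [ENNReal.toReal_ofReal pi_nonneg, two_smul]

theorem exp_U2 (z : EuclideanSpace ℝ (Fin 2)) : exp (U2 z) = ((1 + ‖z‖ ^ 2 / 8) ^ 2)⁻¹ := by
  rw [U2, ← log_rpow (by positivity), exp_log (by positivity), rpow_neg (by positivity)]
  norm_cast

noncomputable def logWeightPrimitive (a r : ℝ) : ℝ :=
  a / 2 * (r * (r * log r)) / (a + r ^ 2) - a / 4 * log (1 + r ^ 2 / a)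

section
variable {a : ℝ}

theorem continuous_logWeightPrimitive (ha : 0 < a) : Continuous (logWeightPrimitive a) := by
  have : Continuous fun r : ℝ => r * log r := continuous_mul_log
  unfold logWeightPrimitive
  refine .sub (.div (by fun_prop) (by fun_prop) fun r => by positivity) ?_
  exact continuous_const.mul (.log (by fun_prop) fun r => by positivity)

theorem hasDerivAt_logWeightPrimitive (ha : 0 < a) {r : ℝ} (hr : 0 < r) :
    HasDerivAt (logWeightPrimitive a) (r * (log r * ((1 + r ^ 2 / a) ^ 2)⁻¹)) r := by
  have hsq : HasDerivAt (fun r : ℝ => r ^ 2) (2 * r) r := by simpa using hasDerivAt_pow 2 r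
  have hmul : HasDerivAt (fun r => r * (r * log r))
      (1 * (r * log r) + r * (1 * log r + r * r⁻¹)) r :=
    (hasDerivAt_id r).mul ((hasDerivAt_id r).mul (hasDerivAt_log hr.ne'))
  have h1 := (hmul.const_mul (a / 2)).div (hsq.const_add a) (by positivity)
  have h2 := ((hsq.div_const a).const_add 1).log (by positivity)
  refine (h1.sub (h2.const_mul (a / 4))).congr_deriv (f := logWeightPrimitive a) ?_
  field_simp
  ring

theorem tendsto_logWeightPrimitive_atTop (ha : 0 < a) :
    Tendsto (logWeightPrimitive a) atTop (𝓝 (a / 4 * log a)) := by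
  have hq : Tendsto (fun r : ℝ => a / (a + r ^ 2)) atTop (𝓝 0) :=
    (tendsto_atTop_add_const_left _ a (tendsto_pow_atTop two_ne_zero)).const_div_atTop a
  have hlog : Tendsto (fun r : ℝ => log r / r ^ 2) atTop (𝓝 0) := by
    simpa [rpow_natCast] using
      (isLittleO_log_rpow_atTop (by norm_num : (0 : ℝ) < 2)).tendsto_div_nhds_zero
  -- for `r > 0`, `logWeightPrimitive a r = a/4 · log (a r² / (a + r²)) - a²/2 · (log r / r²) · r² / (a + r²)`
  have key : Tendsto (fun r : ℝ => a / 4 * log (a * (1 - a / (a + r ^ 2)))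
      - a ^ 2 / 2 * (log r / r ^ 2 * (1 - a / (a + r ^ 2)))) atTop
      (𝓝 (a / 4 * log (a * (1 - 0)) - a ^ 2 / 2 * (0 * (1 - 0)))) := by
    refine .sub (.const_mul _ (.log (.const_mul _ (tendsto_const_nhds.sub hq)) ?_))
      (.const_mul _ (hlog.mul (tendsto_const_nhds.sub hq)))
    simpa using ha.ne'
  rw [sub_zero, mul_one, zero_mul, mul_zero, sub_zero] at key
  refine key.congr' ?_
  filter_upwards [eventually_gt_atTop 0] with r hr
  have hsub : 1 - a / (a + r ^ 2) = r ^ 2 / (a + r ^ 2) := by field_simp; ring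
  have hlog1 : log (a * (r ^ 2 / (a + r ^ 2))) = log a + 2 * log r - log (a + r ^ 2) := by
    rw [log_mul ha.ne' (by positivity), log_div (by positivity) (by positivity), log_pow]
    push_cast; ring
  have hlog2 : log (1 + r ^ 2 / a) = log (a + r ^ 2) - log a := by
    rw [← log_div (by positivity) ha.ne']; congr 1; field_simp
  rw [logWeightPrimitive, hsub, hlog1, hlog2]
  field_simp
  ring

theorem integrableOn_Ioi_mul_log_mul_inv_sq (ha : 0 < a) :
    IntegrableOn (fun r => r * (log r * ((1 + r ^ 2 / a) ^ 2)⁻¹)) (Ioi 0) := by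
  have hG := continuous_logWeightPrimitive ha
  have hderiv : ∀ r ∈ Ioi (0 : ℝ), HasDerivAt (logWeightPrimitive a)
      (r * (log r * ((1 + r ^ 2 / a) ^ 2)⁻¹)) r := fun r hr => hasDerivAt_logWeightPrimitive ha hr
  rw [← Ioc_union_Ioi_eq_Ioi zero_le_one]
  refine .union ?_ ?_
  · have := intervalIntegral.integrableOn_deriv_of_nonneg (b := 1) hG.neg.continuousOn
      (fun r hr => (hderiv r hr.1).neg) fun r hr => ?_
    · simpa using this.neg
    · exact neg_nonneg.mpr <| mul_nonpos_of_nonneg_of_nonpos hr.1.le <|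
        mul_nonpos_of_nonpos_of_nonneg (log_nonpos hr.1.le hr.2.le) (by positivity)
  · refine integrableOn_Ioi_deriv_of_nonneg hG.continuousWithinAt
      (fun r (hr : 1 < r) => hderiv r (zero_lt_one.trans hr)) (fun r hr => ?_)
      (tendsto_logWeightPrimitive_atTop ha)
    exact mul_nonneg (zero_le_one.trans hr.out.le) <|
      mul_nonneg (log_nonneg hr.out.le) (by positivity)

theorem integral_Ioi_mul_log_mul_inv_sq (ha : 0 < a) :
    ∫ r in Ioi 0, r * (log r * ((1 + r ^ 2 / a) ^ 2)⁻¹) = a / 4 * log a := by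
  simpa [logWeightPrimitive] using integral_Ioi_of_hasDerivAt_of_tendsto
    (continuous_logWeightPrimitive ha).continuousWithinAt
    (fun r hr => hasDerivAt_logWeightPrimitive ha hr)
    (integrableOn_Ioi_mul_log_mul_inv_sq ha) (tendsto_logWeightPrimitive_atTop ha)

end

theorem integral_log_mul_expU :
    ∫ z : EuclideanSpace ℝ (Fin 2), Real.log ‖z‖ * Real.exp (U2 z) = 12 * π * Real.log 2 := by
  simp_rw [exp_U2]
  rw [integral_comp_norm_euclideanSpace_fin_two fun r => log r * ((1 + r ^ 2 / 8) ^ 2)⁻¹]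
  simp_rw [smul_eq_mul]
  rw [integral_Ioi_mul_log_mul_inv_sq (by norm_num), show (8 : ℝ) = 2 ^ 3 by norm_num, log_pow]
  push_cast
  ring
end

section
/- The one-dimensional integral ∫₀^∞ 16 t (t² - 1)/(t² + 1)³ · (log(1 + t²))² dt equals 12. -/
/-! After the substitution `u = 1 + t²` the integrand becomes `8 (u - 2) log² u / u³` on `(1, ∞)`,
which has the elementary antiderivative `4 (2 (1 - u) log² u + 2 (1 - 2u) log u + 1 - 4u) / u²`.
It vanishes at infinity and equals `-12` at `u = 1`. -/

open MeasureTheory Real Filter Set Topology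

theorem integrableOn_Ioi_deriv_of_eventually_nonneg {f f' : ℝ → ℝ} {a b l : ℝ} (hab : a ≤ b)
    (hint : IntegrableOn f' (Ioc a b)) (hderiv : ∀ x ∈ Ici b, HasDerivAt f (f' x) x)
    (hpos : ∀ x ∈ Ioi b, 0 ≤ f' x) (hf : Tendsto f atTop (𝓝 l)) :
    IntegrableOn f' (Ioi a) := by
  rw [← Ioc_union_Ioi_eq_Ioi hab]
  exact hint.union (integrableOn_Ioi_deriv_of_nonneg' hderiv hpos hf)

noncomputable def logSqAntideriv (u : ℝ) : ℝ :=
  4 * (2 * (1 - u) * log u ^ 2 + 2 * (1 - 2 * u) * log u + 1 - 4 * u) / u ^ 2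

theorem hasDerivAt_logSqAntideriv {u : ℝ} (hu : 0 < u) :
    HasDerivAt logSqAntideriv (8 * (u - 2) / u ^ 3 * log u ^ 2) u := by
  have hlog : HasDerivAt log u⁻¹ u := hasDerivAt_log hu.ne'
  have hnum : HasDerivAt
      (fun v => 4 * (2 * (1 - v) * log v ^ 2 + 2 * (1 - 2 * v) * log v + 1 - 4 * v))
      (4 * (-2 * log u ^ 2 + (4 / u - 8) * log u + 2 / u - 8)) u := by
    have := (((((hasDerivAt_id' u).const_sub 1).const_mul 2).fun_mul (hlog.fun_pow 2)).fun_add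
      ((((hasDerivAt_id' u).const_mul 2).const_sub 1).const_mul 2 |>.fun_mul hlog) |>.add_const 1
      |>.fun_sub ((hasDerivAt_id' u).const_mul 4)).const_mul 4
    refine this.congr_deriv ?_
    field_simp
    ring
  refine (hnum.div (hasDerivAt_pow 2 u) (pow_ne_zero 2 hu.ne')).congr_deriv ?_
  field_simp
  ring

theorem tendsto_logSqAntideriv_atTop : Tendsto logSqAntideriv atTop (𝓝 0) := by
  have hlog (n : ℕ) : Tendsto (fun u => log u ^ n / u) atTop (𝓝 0) := by
    simpa using tendsto_pow_log_div_mul_add_atTop 1 0 n one_ne_zero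
  have hinv : Tendsto (fun u : ℝ => u⁻¹) atTop (𝓝 0) := tendsto_inv_atTop_zero
  have hlim := ((((hinv.sub_const 1).const_mul 2).mul (hlog 2)).add
    (((hinv.sub_const 2).const_mul 2).mul (hlog 1)) |>.add (hinv.mul hinv)
    |>.sub (hinv.const_mul 4)).const_mul 4
  simp only [mul_zero, add_zero, sub_zero] at hlim
  refine hlim.congr' ?_
  filter_upwards [eventually_gt_atTop 0] with u hu
  simp only [logSqAntideriv, pow_one]
  field_simp

theorem logSqAntideriv_one : logSqAntideriv 1 = -12 := by
  norm_num [logSqAntideriv]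

theorem integral_one_dim :
    ∫ t in Set.Ioi (0:ℝ), 16 * t * (t^2 - 1) / (t^2 + 1)^3 * (Real.log (1 + t^2))^2 = 12 := by
  set F : ℝ → ℝ := fun t => logSqAntideriv (1 + t ^ 2)
  have hderiv (t : ℝ) :
      HasDerivAt F (16 * t * (t^2 - 1) / (t^2 + 1)^3 * (Real.log (1 + t^2))^2) t := by
    have := (hasDerivAt_logSqAntideriv (by positivity : 0 < 1 + t ^ 2)).comp t
      ((hasDerivAt_pow 2 t).const_add 1)
    refine this.congr_deriv ?_
    push_cast
    ring
  have hF : Tendsto F atTop (𝓝 0) := tendsto_logSqAntideriv_atTop.comp <|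
    tendsto_atTop_add_const_left _ 1 (tendsto_pow_atTop two_ne_zero)
  have hpos (t : ℝ) (ht : 1 < t) :
      0 ≤ 16 * t * (t^2 - 1) / (t^2 + 1)^3 * (Real.log (1 + t^2))^2 := by
    have : 0 ≤ 16 * t * (t ^ 2 - 1) := by nlinarith
    positivity
  have hint := integrableOn_Ioi_deriv_of_eventually_nonneg zero_le_one
    (Continuous.integrableOn_Ioc (by fun_prop (disch := intro; positivity)))
    (fun t _ => hderiv t) hpos hF
  rw [integral_Ioi_of_hasDerivAt_of_tendsto' (fun t _ => hderiv t) hint hF]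
  norm_num [F, logSqAntideriv_one]
end

section
/- For r > 0, the function u₁(r) = ((8 - r²) log r + 16)/(r² + 8) satisfies the ODE -u₁'' - (1/r) u₁' = e^{U(r)} u₁, where e^{U(r)} = 1/(1 + r²/8)². -/
/-!
Writing the radial operator in divergence form, `-u'' - u'/r = -(1/r) (r u')'`, it suffices to
compute the flux `r u₁' = (64 - 32 r² - r⁴ - 32 r² log r) / (r² + 8)²` and check that its
derivative is `-64 r u₁ / (r² + 8)² = -r e^U u₁`.
-/

open Real Filter Topology

lemma neg_deriv_deriv_sub_one_div_mul_deriv_eq_of_flux {f F : ℝ → ℝ} {r F' : ℝ}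
    (hr : r ≠ 0) (hflux : ∀ᶠ s in 𝓝 r, s * deriv f s = F s) (hF : HasDerivAt F F' r) :
    -deriv (deriv f) r - (1 / r) * deriv f r = -F' / r := by
  have hderiv : deriv f =ᶠ[𝓝 r] fun s => F s / s := by
    filter_upwards [hflux, eventually_ne_nhds hr] with s hs hs0
    rw [← hs, mul_div_cancel_left₀ _ hs0]
  have hsecond : deriv (deriv f) r = (F' * r - F r * 1) / r ^ 2 := by
    rw [hderiv.deriv_eq]
    exact (hF.div (hasDerivAt_id r) hr).deriv
  rw [hsecond, hderiv.eq_of_nhds]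
  field_simp
  ring

noncomputable def u1 (s : ℝ) : ℝ := ((8 - s ^ 2) * log s + 16) / (s ^ 2 + 8)

noncomputable def u1Flux (s : ℝ) : ℝ :=
  (64 - 32 * s ^ 2 - s ^ 4 - 32 * s ^ 2 * log s) / (s ^ 2 + 8) ^ 2

lemma hasDerivAt_u1 {s : ℝ} (hs : s ≠ 0) : HasDerivAt u1 (u1Flux s / s) s := by
  refine HasDerivAt.congr_deriv
    (((((hasDerivAt_pow 2 s).const_sub 8).mul (hasDerivAt_log hs)).add_const 16).div
      ((hasDerivAt_pow 2 s).add_const 8) (by positivity)) ?_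
  simp only [u1Flux, Pi.mul_apply]
  field_simp
  ring

lemma hasDerivAt_u1Flux {s : ℝ} (hs : s ≠ 0) :
    HasDerivAt u1Flux (-(s * u1 s / (1 + s ^ 2 / 8) ^ 2)) s := by
  refine HasDerivAt.congr_deriv
    (((((hasDerivAt_pow 2 s).const_mul 32).const_sub 64 |>.sub (hasDerivAt_pow 4 s)).sub
        (((hasDerivAt_pow 2 s).const_mul 32).mul (hasDerivAt_log hs))).div
      (((hasDerivAt_pow 2 s).add_const 8).pow 2) (by positivity)) ?_
  simp only [u1, Pi.mul_apply, Pi.sub_apply]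
  field_simp
  ring

theorem u1_solves_radial_linearized_liouville :
    ∀ r : ℝ, 0 < r →
      -(deriv (deriv (fun s : ℝ => ((8 - s^2) * Real.log s + 16) / (s^2 + 8))) r)
        - (1 / r) * deriv (fun s : ℝ => ((8 - s^2) * Real.log s + 16) / (s^2 + 8)) r
      = (1 / (1 + r^2 / 8)^2) * (((8 - r^2) * Real.log r + 16) / (r^2 + 8)) := by
  intro r hr
  have hflux : ∀ᶠ s in 𝓝 r, s * deriv u1 s = u1Flux s := by
    filter_upwards [eventually_ne_nhds hr.ne'] with s hs
    rw [(hasDerivAt_u1 hs).deriv, mul_div_cancel₀ _ hs]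
  change -deriv (deriv u1) r - (1 / r) * deriv u1 r = 1 / (1 + r ^ 2 / 8) ^ 2 * u1 r
  rw [neg_deriv_deriv_sub_one_div_mul_deriv_eq_of_flux hr.ne' hflux (hasDerivAt_u1Flux hr.ne')]
  field_simp
end

section
/- Let v ∈ C²(ℝ²) be a radial solution of −Δv = e^U v on ℝ² with ∫_{ℝ²} |∇v|² < ∞, where U(x) = −2 log(1 + |x|²/8). Then v is a constant multiple of (8 − |x|²)/(8 + |x|²). -/
open MeasureTheory Real

/-!
The profile `f r = v (r • e₀)` is even and solves `f'' + f'/r + k f = 0` on `r > 0`, with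
`k r = 64 / (8 + r²)²`, and so does `φ r = (8 - r²) / (8 + r²)`. By Abel's identity
`r · W(f, φ)` is constant, and it vanishes at `r = 0`, so the Wronskian `W(f, φ)` vanishes on
`r > 0`. Then `W(f', φ') = k W(f, φ) = 0` makes `f' / φ'` a constant `c` (as `φ'` has no zero on
`r > 0`), so `f - c φ` is constant, and `W(f, φ) = 0` forces that constant to be `0`.
-/

open scoped InnerProductSpace

lemma eq_of_hasDerivAt_zero_of_le {h : ℝ → ℝ} {a t : ℝ} (hh : ∀ s, a ≤ s → HasDerivAt h 0 s)
    (ht : a ≤ t) : h t = h a :=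
  constant_of_has_deriv_right_zero (fun s hs => (hh s hs.1).continuousAt.continuousWithinAt)
    (fun s hs => (hh s hs.1).hasDerivWithinAt) t ⟨ht, le_rfl⟩

lemma Function.Even.deriv_zero {f : ℝ → ℝ} (hf : Function.Even f) : deriv f 0 = 0 := by
  have h := deriv_comp_neg (f := f) (x := 0)
  simp only [hf _, neg_zero] at h
  linarith

/-- The radial form of `-Δu = k(|x|) u` in the plane, for the profile `f` of `u`. -/
structure IsRadialSolution (k f : ℝ → ℝ) : Prop where
  differentiable : Differentiable ℝ f
  differentiable_deriv : Differentiable ℝ (deriv f)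
  ode : ∀ t > 0, deriv (deriv f) t + deriv f t / t + k t * f t = 0

noncomputable def wronskian (f g : ℝ → ℝ) (t : ℝ) : ℝ := deriv f t * g t - f t * deriv g t

namespace IsRadialSolution

variable {k f g : ℝ → ℝ}

lemma hasDerivAt_id_mul_wronskian (hf : IsRadialSolution k f) (hg : IsRadialSolution k g)
    (t : ℝ) : HasDerivAt (fun s => s * wronskian f g s)
      (wronskian f g t + t * (deriv (deriv f) t * g t - f t * deriv (deriv g) t)) t := by
  have hW : HasDerivAt (wronskian f g) (deriv (deriv f) t * g t - f t * deriv (deriv g) t) t :=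
    (((hf.differentiable_deriv t).hasDerivAt.mul (hg.differentiable t).hasDerivAt).sub
      ((hf.differentiable t).hasDerivAt.mul (hg.differentiable_deriv t).hasDerivAt)).congr_deriv
      (by ring)
  exact ((hasDerivAt_id t).mul hW).congr_deriv (by simp)

lemma wronskian_eq_zero (hf : IsRadialSolution k f) (hg : IsRadialSolution k g)
    (hf0 : deriv f 0 = 0) (hg0 : deriv g 0 = 0) {t : ℝ} (ht : 0 < t) : wronskian f g t = 0 := by
  have hM : ∀ s, 0 ≤ s → HasDerivAt (fun s => s * wronskian f g s) 0 s := by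
    intro s hs
    refine (hasDerivAt_id_mul_wronskian hf hg s).congr_deriv ?_
    rcases hs.eq_or_lt with rfl | hs
    · simp [wronskian, hf0, hg0]
    · have hf' := hf.ode s hs
      have hg' := hg.ode s hs
      unfold wronskian
      field_simp at hf' hg' ⊢
      linear_combination g s * hf' - f s * hg'
  simpa [ht.ne'] using eq_of_hasDerivAt_zero_of_le hM ht.le

lemma wronskian_deriv (hf : IsRadialSolution k f) (hg : IsRadialSolution k g) {t : ℝ}
    (ht : 0 < t) : wronskian (deriv f) (deriv g) t = k t * wronskian f g t := by
  unfold wronskian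
  linear_combination deriv g t * hf.ode t ht - deriv f t * hg.ode t ht

theorem exists_eq_const_mul (hf : IsRadialSolution k f) (hg : IsRadialSolution k g)
    (hf0 : deriv f 0 = 0) (hg0 : deriv g 0 = 0) (hg' : ∀ t > 0, deriv g t ≠ 0) :
    ∃ c, ∀ t ≥ 0, f t = c * g t := by
  have hW : ∀ t > 0, wronskian f g t = 0 := fun t ht => wronskian_eq_zero hf hg hf0 hg0 ht
  obtain ⟨c, hc⟩ : ∃ c, ∀ t > 0, deriv f t / deriv g t = c := by
    refine isOpen_Ioi.exists_is_const_of_deriv_eq_zero isPreconnected_Ioi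
      (fun t ht => ((hf.differentiable_deriv t).div (hg.differentiable_deriv t)
        (hg' t ht)).differentiableWithinAt) (fun t ht => ?_)
    refine ((hf.differentiable_deriv t).hasDerivAt.div (hg.differentiable_deriv t).hasDerivAt
      (hg' t ht)).deriv.trans (div_eq_zero_iff.mpr (Or.inl ?_))
    have h := wronskian_deriv hf hg ht
    rwa [hW t ht, mul_zero] at h
  have hconst : ∀ t ≥ 0, f t - c * g t = f 0 - c * g 0 := by
    refine fun t ht => eq_of_hasDerivAt_zero_of_le (h := fun t => f t - c * g t) (fun s hs => ?_) ht
    refine ((hf.differentiable s).hasDerivAt.sub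
      ((hg.differentiable s).hasDerivAt.const_mul c)).congr_deriv ?_
    rcases hs.eq_or_lt with rfl | hs
    · simp [hf0, hg0]
    · rw [← hc s hs, div_mul_cancel₀ _ (hg' s hs), sub_self]
  have hd : f 0 - c * g 0 = 0 := by
    have hg1 := hg' 1 one_pos
    have hf'1 : deriv f 1 = c * deriv g 1 := (div_eq_iff hg1).mp (hc 1 one_pos)
    have hf1 : f 1 = c * g 1 + (f 0 - c * g 0) := by linarith [hconst 1 zero_le_one]
    have hW1 : deriv f 1 * g 1 - f 1 * deriv g 1 = 0 := hW 1 one_pos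
    have hd1 : (f 0 - c * g 0) * deriv g 1 = 0 := by
      linear_combination -hW1 + g 1 * hf'1 - deriv g 1 * hf1
    exact (mul_eq_zero.mp hd1).resolve_right hg1
  exact ⟨c, fun t ht => by linarith [hconst t ht]⟩

end IsRadialSolution

noncomputable def kernelProfile (t : ℝ) : ℝ := (8 - t ^ 2) / (8 + t ^ 2)

noncomputable def liouvilleWeight (t : ℝ) : ℝ := 64 / (8 + t ^ 2) ^ 2

lemma hasDerivAt_kernelProfile (t : ℝ) :
    HasDerivAt kernelProfile (-32 * t / (8 + t ^ 2) ^ 2) t := by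
  have hpos : (8 : ℝ) + t ^ 2 ≠ 0 := by positivity
  refine (((hasDerivAt_pow 2 t).const_sub 8).div ((hasDerivAt_pow 2 t).const_add 8)
    hpos).congr_deriv ?_
  field_simp
  ring

lemma deriv_kernelProfile : deriv kernelProfile = fun t => -32 * t / (8 + t ^ 2) ^ 2 :=
  funext fun t => (hasDerivAt_kernelProfile t).deriv

lemma hasDerivAt_deriv_kernelProfile (t : ℝ) :
    HasDerivAt (deriv kernelProfile) (-32 * (8 - 3 * t ^ 2) / (8 + t ^ 2) ^ 3) t := by
  have hpos : (8 : ℝ) + t ^ 2 ≠ 0 := by positivity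
  rw [deriv_kernelProfile]
  refine (((hasDerivAt_id t).const_mul (-32)).div
    (((hasDerivAt_pow 2 t).const_add 8).pow 2) (pow_ne_zero 2 hpos)).congr_deriv ?_
  simp only [id, Pi.pow_apply]
  field_simp
  ring

lemma isRadialSolution_kernelProfile : IsRadialSolution liouvilleWeight kernelProfile where
  differentiable t := (hasDerivAt_kernelProfile t).differentiableAt
  differentiable_deriv t := (hasDerivAt_deriv_kernelProfile t).differentiableAt
  ode t ht := by
    rw [(hasDerivAt_deriv_kernelProfile t).deriv, deriv_kernelProfile, liouvilleWeight,
      kernelProfile]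
    field_simp
    ring

lemma deriv_kernelProfile_ne_zero {t : ℝ} (ht : t ≠ 0) : deriv kernelProfile t ≠ 0 := by
  rw [deriv_kernelProfile]
  exact div_ne_zero (mul_ne_zero (by norm_num) ht) (by positivity)

lemma exp_U2_s17 (x : EuclideanSpace ℝ (Fin 2)) : exp (U2 x) = liouvilleWeight ‖x‖ := by
  have hpos : 0 < 1 + ‖x‖ ^ 2 / 8 := by positivity
  rw [U2, neg_mul, two_mul, exp_neg, exp_add, exp_log hpos, liouvilleWeight]
  field_simp
  ring

section LineDerivative

variable {E G : Type*} [NormedAddCommGroup E] [NormedSpace ℝ E] [NormedAddCommGroup G]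
  [NormedSpace ℝ G]

lemma hasDerivAt_comp_add_smul {F : E → G} {x d : E} {t : ℝ}
    (hF : DifferentiableAt ℝ F (x + t • d)) :
    HasDerivAt (fun s : ℝ => F (x + s • d)) (fderiv ℝ F (x + t • d) d) t :=
  hF.hasFDerivAt.comp_hasDerivAt t (by simpa using ((hasDerivAt_id t).smul_const d).const_add x)

lemma deriv_comp_smul {F : E → G} (hF : Differentiable ℝ F) (d : E) :
    deriv (fun s : ℝ => F (s • d)) = fun s => fderiv ℝ F (s • d) d :=
  funext fun s => by simpa using (hasDerivAt_comp_add_smul (x := 0) (hF (0 + s • d))).deriv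

lemma ContDiff.differentiable_fderiv_apply {v : E → G} (hv : ContDiff ℝ 2 v) (d : E) :
    Differentiable ℝ (fun y => fderiv ℝ v y d) :=
  ((hv.fderiv_right (m := 1) (by norm_num)).differentiable one_ne_zero).clm_apply
    (differentiable_const d)

lemma eq_comp_norm_smul {α : Type*} {v : E → α} (hrad : ∃ g : ℝ → α, ∀ x, v x = g ‖x‖) {e : E}
    (he : ‖e‖ = 1) (x : E) : v x = v (‖x‖ • e) := by
  obtain ⟨g, hg⟩ := hrad
  rw [hg, hg, norm_smul, he, mul_one, norm_norm]

end LineDerivative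

section Radial

variable {E : Type*} [NormedAddCommGroup E] [InnerProductSpace ℝ E]

lemma norm_add_smul_of_inner_eq_zero {x e : E} (hxe : ⟪x, e⟫_ℝ = 0) (he : ‖e‖ = 1) (s : ℝ) :
    ‖x + s • e‖ = √(‖x‖ ^ 2 + s ^ 2) := by
  have h := norm_add_sq_eq_norm_sq_add_norm_sq_real
    (show ⟪x, s • e⟫_ℝ = 0 by rw [real_inner_smul_right, hxe, mul_zero])
  rw [norm_smul, he, mul_one, norm_eq_abs] at h
  rw [eq_comm, sqrt_eq_iff_mul_self_eq (by positivity) (norm_nonneg _), h, sq, sq, abs_mul_abs_self]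

theorem fderiv_fderiv_apply_of_inner_eq_zero {v : E → ℝ} {f : ℝ → ℝ} (hvf : ∀ y, v y = f ‖y‖)
    (hv : Differentiable ℝ v) (hf : Differentiable ℝ f) (hf' : Differentiable ℝ (deriv f))
    {x e : E} (hv' : DifferentiableAt ℝ (fun y => fderiv ℝ v y e) x) (hx : x ≠ 0)
    (hxe : ⟪x, e⟫_ℝ = 0) (he : ‖e‖ = 1) :
    fderiv ℝ (fun y => fderiv ℝ v y e) x e = deriv f ‖x‖ / ‖x‖ := by
  set ρ : ℝ → ℝ := fun s => √(‖x‖ ^ 2 + s ^ 2)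
  have hq_pos (s : ℝ) : 0 < ‖x‖ ^ 2 + s ^ 2 := by
    have := norm_pos_iff.mpr hx
    positivity
  have hρ_pos (s : ℝ) : 0 < ρ s := sqrt_pos.mpr (hq_pos s)
  have hρ0 : ρ 0 = ‖x‖ := by simp [ρ]
  have hρ (s : ℝ) : HasDerivAt ρ (s / ρ s) s := by
    refine (((hasDerivAt_pow 2 s).const_add _).sqrt (hq_pos s).ne').congr_deriv ?_
    simp only [ρ]
    field_simp
    norm_num
  have hline (s : ℝ) : fderiv ℝ v (x + s • e) e = deriv f (ρ s) * (s / ρ s) := by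
    refine (hasDerivAt_comp_add_smul (t := s) (hv _)).unique ?_
    simp only [hvf, norm_add_smul_of_inner_eq_zero hxe he]
    exact (hf _).hasDerivAt.comp s (hρ s)
  have h1 : HasDerivAt (fun s : ℝ => fderiv ℝ v (x + s • e) e)
      (fderiv ℝ (fun y => fderiv ℝ v y e) x e) 0 := by
    simpa using hasDerivAt_comp_add_smul (F := fun y => fderiv ℝ v y e) (d := e) (t := 0)
      (by simpa using hv')
  have h2 : HasDerivAt (fun s : ℝ => deriv f (ρ s) * (s / ρ s)) (deriv f ‖x‖ / ‖x‖) 0 := by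
    refine (((hf' _).hasDerivAt.comp 0 (hρ 0)).mul ((hasDerivAt_id 0).div (hρ 0)
      (hρ_pos 0).ne')).congr_deriv ?_
    simp only [hρ0, zero_div, mul_zero, Pi.div_apply, Function.comp_apply, one_mul, sub_zero,
      zero_add]
    field_simp
  exact h1.unique (by simpa only [hline] using h2)

end Radial

noncomputable def radialProfile (v : EuclideanSpace ℝ (Fin 2) → ℝ) (r : ℝ) : ℝ :=
  v (r • EuclideanSpace.single 0 1)

section RadialProfile

variable {v : EuclideanSpace ℝ (Fin 2) → ℝ}

lemma eq_radialProfile_norm (hrad : ∃ g : ℝ → ℝ, ∀ x, v x = g ‖x‖) (x : EuclideanSpace ℝ (Fin 2)) :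
    v x = radialProfile v ‖x‖ :=
  eq_comp_norm_smul hrad (by simp) x

lemma radialProfile_even (hrad : ∃ g : ℝ → ℝ, ∀ x, v x = g ‖x‖) :
    Function.Even (radialProfile v) := fun r => by
  obtain ⟨g, hg⟩ := hrad
  simp only [radialProfile, hg, neg_smul, norm_neg]

lemma deriv_radialProfile (hv : ContDiff ℝ 2 v) :
    deriv (radialProfile v) = fun r => fderiv ℝ v (r • EuclideanSpace.single 0 1)
      (EuclideanSpace.single 0 1) :=
  deriv_comp_smul (hv.differentiable (by norm_num)) _

lemma deriv_deriv_radialProfile (hv : ContDiff ℝ 2 v) :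
    deriv (deriv (radialProfile v)) = fun r => fderiv ℝ (fun y => fderiv ℝ v y
      (EuclideanSpace.single 0 1)) (r • EuclideanSpace.single 0 1) (EuclideanSpace.single 0 1) := by
  rw [deriv_radialProfile hv]
  exact deriv_comp_smul (hv.differentiable_fderiv_apply _) _

lemma norm_smul_single_zero {t : ℝ} (ht : 0 ≤ t) :
    ‖t • EuclideanSpace.single (0 : Fin 2) (1 : ℝ)‖ = t := by
  simp [norm_smul, abs_of_nonneg ht]

lemma differentiable_radialProfile (hv : Differentiable ℝ v) :
    Differentiable ℝ (radialProfile v) :=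
  hv.comp (differentiable_id.smul_const _)

lemma differentiable_deriv_radialProfile (hv : ContDiff ℝ 2 v) :
    Differentiable ℝ (deriv (radialProfile v)) := by
  rw [deriv_radialProfile hv]
  exact (hv.differentiable_fderiv_apply _).comp (differentiable_id.smul_const _)

lemma lap2_smul_single (hv : ContDiff ℝ 2 v) (hrad : ∃ g : ℝ → ℝ, ∀ x, v x = g ‖x‖) {t : ℝ}
    (ht : 0 < t) : lap2 v (t • EuclideanSpace.single 0 1) =
      deriv (deriv (radialProfile v)) t + deriv (radialProfile v) t / t := by
  have hv1 : Differentiable ℝ v := hv.differentiable (by norm_num)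
  have hangular := fderiv_fderiv_apply_of_inner_eq_zero (eq_radialProfile_norm hrad) hv1
    (x := t • EuclideanSpace.single 0 1) (e := EuclideanSpace.single 1 1)
    (differentiable_radialProfile hv1) (differentiable_deriv_radialProfile hv)
    (hv.differentiable_fderiv_apply _ _) (by simp [ht.ne'])
    (by rw [real_inner_smul_left, EuclideanSpace.inner_single_left]; simp) (by simp)
  rw [lap2, Fin.sum_univ_two, hangular, deriv_deriv_radialProfile hv, norm_smul_single_zero ht.le]

lemma isRadialSolution_radialProfile {k : ℝ → ℝ} (hv : ContDiff ℝ 2 v)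
    (hrad : ∃ g : ℝ → ℝ, ∀ x, v x = g ‖x‖) (heq : ∀ x, -lap2 v x = k ‖x‖ * v x) :
    IsRadialSolution k (radialProfile v) where
  differentiable := differentiable_radialProfile (hv.differentiable (by norm_num))
  differentiable_deriv := differentiable_deriv_radialProfile hv
  ode t ht := by
    have h := heq (t • EuclideanSpace.single 0 1)
    rw [lap2_smul_single hv hrad ht, norm_smul_single_zero ht.le] at h
    rw [radialProfile]
    linarith

end RadialProfile

theorem radial_kernel_linearized_liouville_general (v : EuclideanSpace ℝ (Fin 2) → ℝ)
    (hv : ContDiff ℝ 2 v) (hrad : ∃ g : ℝ → ℝ, ∀ x, v x = g ‖x‖)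
    (heq : ∀ x, -lap2 v x = Real.exp (U2 x) * v x) :
    ∃ c : ℝ, ∀ x : EuclideanSpace ℝ (Fin 2), v x = c * ((8 - ‖x‖^2) / (8 + ‖x‖^2)) := by
  have hsol : IsRadialSolution liouvilleWeight (radialProfile v) :=
    isRadialSolution_radialProfile hv hrad fun x => by rw [heq, exp_U2_s17]
  obtain ⟨c, hc⟩ := hsol.exists_eq_const_mul isRadialSolution_kernelProfile
    (radialProfile_even hrad).deriv_zero (by simp [deriv_kernelProfile])
    fun t ht => deriv_kernelProfile_ne_zero ht.ne'
  exact ⟨c, fun x => by rw [eq_radialProfile_norm hrad, hc _ (norm_nonneg x), kernelProfile]⟩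

theorem radial_kernel_linearized_liouville (v : EuclideanSpace ℝ (Fin 2) → ℝ)
    (hv : ContDiff ℝ 2 v) (hrad : ∃ g : ℝ → ℝ, ∀ x, v x = g ‖x‖)
    (heq : ∀ x, -lap2 v x = Real.exp (U2 x) * v x)
    (hint : Integrable (fun x : EuclideanSpace ℝ (Fin 2) => ‖gradient v x‖^2)) :
    ∃ c : ℝ, ∀ x : EuclideanSpace ℝ (Fin 2), v x = c * ((8 - ‖x‖^2) / (8 + ‖x‖^2)) :=
  radial_kernel_linearized_liouville_general v hv hrad heq
end

section
/- With U(x) = −2 log(1 + |x|²/8) and w₀ any C² solution on ℝ² of −Δw₀ − e^U w₀ = −(U²/2) e^U satisfying |w₀(x)| ≤ C(1 + |x|)^τ for some τ ∈ (0,1), one has lim_{R→∞} ∫_{∂B_R(0)} ∂w₀/∂ν dσ = 24π; equivalently ∫_{ℝ²} Δw₀ dx = 24π. -/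
open MeasureTheory Real

/-!
Write `Q = 1 + |x|² / 8`, so that `e^U = Q⁻²`, and `S = (U² / 2) e^U = 2 log² Q / Q²`; the
equation says `Δw₀ = S - e^U w₀`. The function `φ = 2 / Q` satisfies `Δφ = e^U (1 - φ)`, and it
decays like `|x|⁻²` with gradient `O(|x|⁻³)`, while `w₀` grows at most linearly. Green's identity
`∫ φ Δw₀ - w₀ Δφ = 0` therefore holds: after cutting off at scale `R` the error is
`O(R · R⁻⁴ · R²) = O(1/R)`. It reads `∫ e^U w₀ = ∫ φ S`, so that `∫ Δw₀ = ∫ S - ∫ φ S`.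
Both integrals are radial; with `u = Q` one has `dx = 8π du`, and `∫₁^∞ 2 log² u / u² du = 4`,
`∫₁^∞ 4 log² u / u³ du = 1` by explicit primitives, whence `∫ Δw₀ = 32π - 8π = 24π`.
-/

open Set Filter Metric Topology

local notation "ℝ²" => EuclideanSpace ℝ (Fin 2)

namespace LinearizedLiouville

noncomputable def partialDeriv (i : Fin 2) (f : ℝ² → ℝ) (x : ℝ²) : ℝ :=
  fderiv ℝ f x (EuclideanSpace.single i 1)

local notation "∂" => partialDeriv

lemma lap2_eq_sum (u : ℝ² → ℝ) (x : ℝ²) : lap2 u x = ∑ i, ∂ i (∂ i u) x := rfl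

section Calculus

variable {f g : ℝ² → ℝ} {x : ℝ²} (i : Fin 2)

lemma contDiff_partialDeriv {m n : WithTop ℕ∞} (hf : ContDiff ℝ n f) (hmn : m + 1 ≤ n) :
    ContDiff ℝ m (∂ i f) :=
  (hf.fderiv_right hmn).clm_apply contDiff_const

lemma partialDeriv_eq_of_hasFDerivAt {f' : ℝ² →L[ℝ] ℝ} (hf : HasFDerivAt f f' x) :
    ∂ i f x = f' (EuclideanSpace.single i 1) := by
  rw [partialDeriv, hf.fderiv]

lemma partialDeriv_add (hf : DifferentiableAt ℝ f x) (hg : DifferentiableAt ℝ g x) :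
    ∂ i (fun y => f y + g y) x = ∂ i f x + ∂ i g x := by
  simp [partialDeriv, fderiv_fun_add hf hg]

lemma partialDeriv_mul (hf : DifferentiableAt ℝ f x) (hg : DifferentiableAt ℝ g x) :
    ∂ i (fun y => f y * g y) x = ∂ i f x * g x + f x * ∂ i g x := by
  simp [partialDeriv, fderiv_fun_mul hf hg]
  ring

lemma partialDeriv_comp_smul (c : ℝ) :
    ∂ i (fun y => f (c • y)) x = c * ∂ i f (c • x) := by
  simp [partialDeriv, fderiv_comp_smul]

lemma partialDeriv_const_mul (c : ℝ) : ∂ i (fun y => c * f y) x = c * ∂ i f x := by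
  simp [partialDeriv, show (fun y => c * f y) = c • f from rfl, fderiv_const_smul_field]

lemma lap2_comp_smul (c : ℝ) : lap2 (fun y => f (c • y)) x = c ^ 2 * lap2 f (c • x) := by
  have first (i : Fin 2) : ∂ i (fun y => f (c • y)) = fun y => c * ∂ i f (c • y) :=
    funext fun y => partialDeriv_comp_smul i c
  simp only [lap2_eq_sum, first, partialDeriv_const_mul, partialDeriv_comp_smul, Finset.mul_sum]
  ring_nf

lemma abs_partialDeriv_le : |∂ i f x| ≤ ‖fderiv ℝ f x‖ := by
  simpa [partialDeriv] using (fderiv ℝ f x).le_opNorm (EuclideanSpace.single i 1)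

lemma lap2_mul (hf : ContDiff ℝ 2 f) (hg : ContDiff ℝ 2 g) :
    lap2 (fun y => f y * g y) x =
      f x * lap2 g x + 2 * ∑ i, ∂ i f x * ∂ i g x + g x * lap2 f x := by
  have hf1 := hf.differentiable two_ne_zero
  have hg1 := hg.differentiable two_ne_zero
  have hdf (i : Fin 2) : Differentiable ℝ (∂ i f) :=
    (contDiff_partialDeriv i hf (m := 1) (by norm_num)).differentiable one_ne_zero
  have hdg (i : Fin 2) : Differentiable ℝ (∂ i g) :=
    (contDiff_partialDeriv i hg (m := 1) (by norm_num)).differentiable one_ne_zero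
  have first (i : Fin 2) :
      ∂ i (fun y => f y * g y) = fun y => ∂ i f y * g y + f y * ∂ i g y :=
    funext fun y => partialDeriv_mul i (hf1 y) (hg1 y)
  have second (i : Fin 2) : ∂ i (∂ i fun y => f y * g y) x =
      ∂ i (∂ i f) x * g x + 2 * (∂ i f x * ∂ i g x) + f x * ∂ i (∂ i g) x := by
    rw [first, partialDeriv_add i ((hdf i x).fun_mul (hg1 x)) ((hf1 x).fun_mul (hdg i x)),
      partialDeriv_mul i (hdf i x) (hg1 x), partialDeriv_mul i (hf1 x) (hdg i x)]
    ring
  simp only [lap2_eq_sum, second, Finset.sum_add_distrib, Fin.sum_univ_two]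
  ring

lemma partialDeriv_eventuallyEq_zero {c : ℝ} (h : f =ᶠ[𝓝 x] fun _ => c) :
    ∂ i f =ᶠ[𝓝 x] 0 := by
  filter_upwards [h.eventuallyEq_nhds] with y hy
  simp [partialDeriv, hy.fderiv_eq]

lemma lap2_eq_zero_of_eventuallyEq_const {c : ℝ} (h : f =ᶠ[𝓝 x] fun _ => c) :
    lap2 f x = 0 := by
  simp [lap2_eq_sum, partialDeriv, (partialDeriv_eventuallyEq_zero _ h).fderiv_eq]

lemma continuous_partialDeriv (hf : ContDiff ℝ 1 f) : Continuous (∂ i f) :=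
  (contDiff_partialDeriv i hf (m := 0) le_rfl).continuous

lemma hasCompactSupport_partialDeriv (hf : HasCompactSupport f) :
    HasCompactSupport (∂ i f) :=
  hf.fderiv_apply (𝕜 := ℝ) _

lemma continuous_lap2 (hf : ContDiff ℝ 2 f) : Continuous (lap2 f) :=
  continuous_finsetSum _ fun i _ =>
    continuous_partialDeriv i (contDiff_partialDeriv i hf (by norm_num))

lemma hasCompactSupport_lap2 (hf : HasCompactSupport f) : HasCompactSupport (lap2 f) := by
  have hsum : lap2 f = ∂ 0 (∂ 0 f) + ∂ 1 (∂ 1 f) :=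
    funext fun x => by simp [lap2_eq_sum, Fin.sum_univ_two]
  rw [hsum]
  exact (hasCompactSupport_partialDeriv 0 (hasCompactSupport_partialDeriv 0 hf)).add
    (hasCompactSupport_partialDeriv 1 (hasCompactSupport_partialDeriv 1 hf))

end Calculus

section Radial

variable {x : ℝ²} (i : Fin 2)

lemma partialDeriv_comp_norm_sq {h h' : ℝ → ℝ}
    (hh : HasDerivAt h (h' (‖x‖ ^ 2)) (‖x‖ ^ 2)) :
    ∂ i (fun y => h (‖y‖ ^ 2)) x = 2 * x i * h' (‖x‖ ^ 2) := by
  rw [partialDeriv_eq_of_hasFDerivAt i (f := fun y => h (‖y‖ ^ 2))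
    (hh.comp_hasFDerivAt x (hasStrictFDerivAt_norm_sq x).hasFDerivAt)]
  simp [EuclideanSpace.inner_single_right]
  ring

lemma lap2_comp_norm_sq {h h' h'' : ℝ → ℝ} (hh : ∀ s, 0 ≤ s → HasDerivAt h (h' s) s)
    (hh' : ∀ s, 0 ≤ s → HasDerivAt h' (h'' s) s) :
    lap2 (fun y => h (‖y‖ ^ 2)) x = 4 * (h' (‖x‖ ^ 2) + ‖x‖ ^ 2 * h'' (‖x‖ ^ 2)) := by
  have first (i : Fin 2) : ∂ i (fun y => h (‖y‖ ^ 2)) = fun y => 2 * y i * h' (‖y‖ ^ 2) :=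
    funext fun y => partialDeriv_comp_norm_sq i (hh _ (sq_nonneg _))
  have hd' : DifferentiableAt ℝ (fun y : ℝ² => h' (‖y‖ ^ 2)) x :=
    (hh' _ (sq_nonneg _)).differentiableAt.comp x
      (hasStrictFDerivAt_norm_sq x).differentiableAt
  have hcoord (i : Fin 2) : HasFDerivAt (fun y : ℝ² => 2 * y i)
      ((2 : ℝ) • EuclideanSpace.proj i : ℝ² →L[ℝ] ℝ) x :=
    (EuclideanSpace.proj i : ℝ² →L[ℝ] ℝ).hasFDerivAt.const_mul 2
  have second (i : Fin 2) : ∂ i (∂ i fun y => h (‖y‖ ^ 2)) x =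
      2 * h' (‖x‖ ^ 2) + 4 * x i ^ 2 * h'' (‖x‖ ^ 2) := by
    rw [first, partialDeriv_mul i (hcoord i).differentiableAt hd',
      partialDeriv_comp_norm_sq i (hh' _ (sq_nonneg _)), partialDeriv_eq_of_hasFDerivAt i
        (hcoord i)]
    simp
    ring
  rw [lap2_eq_sum, Fin.sum_univ_two, second, second, EuclideanSpace.norm_sq_eq,
    Fin.sum_univ_two]
  simp only [Real.norm_eq_abs, sq_abs]
  ring

end Radial

section Green

variable {f g : ℝ² → ℝ}

lemma integral_mul_partialDeriv_of_hasCompactSupport (i : Fin 2) (hf : ContDiff ℝ 1 f)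
    (hg : ContDiff ℝ 1 g) (hcs : HasCompactSupport f) :
    ∫ x, f x * ∂ i g x = -∫ x, ∂ i f x * g x :=
  integral_mul_fderiv_eq_neg_fderiv_mul_of_integrable
    (((continuous_partialDeriv i hf).mul hg.continuous).integrable_of_hasCompactSupport
      ((hasCompactSupport_partialDeriv i hcs).mul_right))
    ((hf.continuous.mul (continuous_partialDeriv i hg)).integrable_of_hasCompactSupport
      hcs.mul_right)
    ((hf.continuous.mul hg.continuous).integrable_of_hasCompactSupport hcs.mul_right)
    (fun x _ => hf.differentiable one_ne_zero x) (fun x _ => hg.differentiable one_ne_zero x)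

lemma integral_mul_lap2_of_hasCompactSupport (hf : ContDiff ℝ 2 f) (hg : ContDiff ℝ 2 g)
    (hcs : HasCompactSupport f) :
    ∫ x, f x * lap2 g x = ∫ x, lap2 f x * g x := by
  have hf1 := hf.of_le one_le_two
  have hg1 := hg.of_le one_le_two
  have hpf (i : Fin 2) : ContDiff ℝ 1 (∂ i f) := contDiff_partialDeriv i hf (by norm_num)
  have hpg (i : Fin 2) : ContDiff ℝ 1 (∂ i g) := contDiff_partialDeriv i hg (by norm_num)
  have twice (i : Fin 2) : ∫ x, f x * ∂ i (∂ i g) x = ∫ x, ∂ i (∂ i f) x * g x := by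
    rw [integral_mul_partialDeriv_of_hasCompactSupport i hf1 (hpg i) hcs,
      integral_mul_partialDeriv_of_hasCompactSupport i (hpf i) hg1
        (hasCompactSupport_partialDeriv i hcs), neg_neg]
  have hint_left (i : Fin 2) : Integrable fun x => f x * ∂ i (∂ i g) x :=
    (hf.continuous.mul (continuous_partialDeriv i (hpg i))).integrable_of_hasCompactSupport
      hcs.mul_right
  have hint_right (i : Fin 2) : Integrable fun x => ∂ i (∂ i f) x * g x :=
    ((continuous_partialDeriv i (hpf i)).mul hg.continuous).integrable_of_hasCompactSupport
      (hasCompactSupport_partialDeriv i (hasCompactSupport_partialDeriv i hcs)).mul_right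
  simp only [lap2_eq_sum, Fin.sum_univ_two, mul_add, add_mul]
  rw [integral_add (hint_left 0) (hint_left 1), integral_add (hint_right 0) (hint_right 1),
    twice, twice]

end Green

noncomputable def unitBump : ContDiffBump (0 : ℝ²) := ⟨1, 2, one_pos, one_lt_two⟩

noncomputable def cutoff (R : ℝ) (x : ℝ²) : ℝ := unitBump (R⁻¹ • x)

section Cutoff

variable {R : ℝ} {x : ℝ²}

lemma contDiff_cutoff (R : ℝ) : ContDiff ℝ 2 (cutoff R) :=
  unitBump.contDiff.comp (contDiff_const_smul _)

lemma cutoff_mem_Icc (R : ℝ) (x : ℝ²) : cutoff R x ∈ Icc 0 1 :=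
  ⟨unitBump.nonneg, unitBump.le_one⟩

lemma norm_inv_smul_of_pos (hR : 0 < R) : ‖R⁻¹ • x‖ = ‖x‖ / R := by
  rw [norm_smul, norm_inv, Real.norm_of_nonneg hR.le, inv_mul_eq_div]

lemma cutoff_eq_one (hR : 0 < R) (hx : ‖x‖ ≤ R) : cutoff R x = 1 :=
  unitBump.one_of_mem_closedBall <| by
    rw [mem_closedBall_zero_iff, norm_inv_smul_of_pos hR, show unitBump.rIn = 1 from rfl,
      div_le_one hR]
    exact hx

lemma cutoff_eventuallyEq_one (hR : 0 < R) (hx : ‖x‖ < R) : cutoff R =ᶠ[𝓝 x] fun _ => 1 :=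
  (unitBump.eventuallyEq_one_of_mem_ball (x := R⁻¹ • x) (by
    rw [mem_ball_zero_iff, norm_inv_smul_of_pos hR, show unitBump.rIn = 1 from rfl,
      div_lt_one hR]
    exact hx)).comp_tendsto ((continuous_const_smul R⁻¹).tendsto x)

lemma cutoff_eventuallyEq_zero (hR : 0 < R) (hx : 2 * R < ‖x‖) :
    cutoff R =ᶠ[𝓝 x] fun _ => 0 := by
  filter_upwards [(continuous_norm.tendsto x).eventually (lt_mem_nhds hx)] with y hy
  refine unitBump.zero_of_le_dist ?_
  rw [dist_zero_right, norm_inv_smul_of_pos hR, show unitBump.rOut = 2 from rfl,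
    le_div_iff₀ hR]
  exact hy.le

lemma hasCompactSupport_cutoff (hR : 0 < R) : HasCompactSupport (cutoff R) :=
  HasCompactSupport.intro (isCompact_closedBall 0 (2 * R)) fun x hx =>
    (cutoff_eventuallyEq_zero hR (by simpa using hx)).eq_of_nhds

lemma exists_bound_derivatives_cutoff : ∃ M, ∀ R > 0, ∀ x,
    (∀ i, |∂ i (cutoff R) x| ≤ M / R) ∧ |lap2 (cutoff R) x| ≤ M / R ^ 2 := by
  have hB : ContDiff ℝ 2 unitBump := unitBump.contDiff
  obtain ⟨M₁, hM₁⟩ := (unitBump.hasCompactSupport.fderiv (𝕜 := ℝ)).exists_bound_of_continuous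
    (hB.continuous_fderiv two_ne_zero)
  obtain ⟨M₂, hM₂⟩ :=
    (hasCompactSupport_lap2 unitBump.hasCompactSupport).exists_bound_of_continuous
      (continuous_lap2 hB)
  refine ⟨max M₁ M₂, fun R hR x => ⟨fun i => ?_, ?_⟩⟩
  · unfold cutoff
    rw [partialDeriv_comp_smul, abs_mul, abs_inv, abs_of_pos hR, inv_mul_eq_div]
    gcongr
    exact (abs_partialDeriv_le i).trans ((hM₁ _).trans (le_max_left _ _))
  · unfold cutoff
    rw [lap2_comp_smul, abs_mul, inv_pow, abs_inv, abs_of_pos (by positivity),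
      inv_mul_eq_div]
    gcongr
    exact (hM₂ _).trans (le_max_right _ _)

end Cutoff

lemma abs_integral_le_of_eq_zero_of_lt_norm {f : ℝ² → ℝ} {r M : ℝ} (hr : 0 ≤ r)
    (hbound : ∀ x, ‖x‖ ≤ r → |f x| ≤ M) (hzero : ∀ x, r < ‖x‖ → f x = 0) :
    |∫ x, f x| ≤ M * (π * r ^ 2) := by
  rw [← setIntegral_eq_integral_of_forall_compl_eq_zero (s := closedBall 0 r)
    fun x hx => hzero x (not_le.mp (mt mem_closedBall_zero_iff.mpr hx))]
  have hvol : volume.real (closedBall (0 : ℝ²) r) = π * r ^ 2 := by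
    simp [Measure.real, ENNReal.toReal_ofReal hr, pi_nonneg, mul_comm]
  have := norm_setIntegral_le_of_norm_le_const (μ := volume) (f := f) measure_closedBall_lt_top
    fun x hx => (Real.norm_eq_abs _).trans_le (hbound x (mem_closedBall_zero_iff.mp hx))
  rwa [Real.norm_eq_abs, hvol] at this

section GreenDecay

variable {v φ : ℝ² → ℝ}

/-- `v (Δ (cutoff R * φ) - cutoff R * Δφ)`: the terms in which a derivative falls on the cutoff. -/
noncomputable def cutoffError (v φ : ℝ² → ℝ) (R : ℝ) (x : ℝ²) : ℝ :=
  v x * (2 * ∑ i, ∂ i (cutoff R) x * ∂ i φ x + φ x * lap2 (cutoff R) x)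

lemma integral_cutoff_mul_green (hv : ContDiff ℝ 2 v) (hφ : ContDiff ℝ 2 φ) {R : ℝ}
    (hR : 0 < R) :
    ∫ x, cutoff R x * (φ x * lap2 v x - v x * lap2 φ x) = ∫ x, cutoffError v φ R x := by
  have hχ := contDiff_cutoff R
  have hcs := hasCompactSupport_cutoff hR
  have hχφ : ContDiff ℝ 2 fun x => cutoff R x * φ x := hχ.mul hφ
  have hcsχφ : HasCompactSupport fun x => cutoff R x * φ x := hcs.mul_right
  have green := integral_mul_lap2_of_hasCompactSupport hχφ hv hcsχφ
  have hint₁ : Integrable fun x => cutoff R x * φ x * lap2 v x :=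
    (hχφ.continuous.mul (continuous_lap2 hv)).integrable_of_hasCompactSupport hcsχφ.mul_right
  have hint₂ : Integrable fun x => lap2 (fun x => cutoff R x * φ x) x * v x :=
    ((continuous_lap2 hχφ).mul hv.continuous).integrable_of_hasCompactSupport
      (hasCompactSupport_lap2 hcsχφ).mul_right
  have hint₃ : Integrable fun x => v x * (cutoff R x * lap2 φ x) :=
    (hv.continuous.mul (hχ.continuous.mul (continuous_lap2 hφ))).integrable_of_hasCompactSupport
      hcs.mul_right.mul_left
  calc ∫ x, cutoff R x * (φ x * lap2 v x - v x * lap2 φ x)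
      = ∫ x, (cutoff R x * φ x * lap2 v x - v x * (cutoff R x * lap2 φ x)) := by
        congr 1; ext x; ring
    _ = ∫ x, (lap2 (fun x => cutoff R x * φ x) x * v x - v x * (cutoff R x * lap2 φ x)) := by
        rw [integral_sub hint₁ hint₃, integral_sub hint₂ hint₃, green]
    _ = ∫ x, cutoffError v φ R x := by
        congr 1; ext x
        rw [lap2_mul hχ hφ, cutoffError]
        ring

lemma cutoffError_eq_zero {R : ℝ} {x : ℝ²} (hR : 0 < R) (hx : ‖x‖ < R ∨ 2 * R < ‖x‖) :
    cutoffError v φ R x = 0 := by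
  obtain ⟨c, hc⟩ : ∃ c : ℝ, cutoff R =ᶠ[𝓝 x] fun _ => c := hx.elim
    (fun h => ⟨1, cutoff_eventuallyEq_one hR h⟩) (fun h => ⟨0, cutoff_eventuallyEq_zero hR h⟩)
  simp [cutoffError, (partialDeriv_eventuallyEq_zero _ hc).eq_of_nhds,
    lap2_eq_zero_of_eventuallyEq_const hc]

lemma abs_cutoffError_le {A B M R : ℝ} {x : ℝ²} (hR : 1 ≤ R)
    (hx2R : ‖x‖ ≤ 2 * R) (hv_growth : |v x| ≤ A * (1 + ‖x‖)) (hφ_decay : ‖x‖ ^ 2 * |φ x| ≤ B)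
    (hdφ_decay : ∀ i, ‖x‖ ^ 3 * |∂ i φ x| ≤ B) (hdχ : ∀ i, |∂ i (cutoff R) x| ≤ M / R)
    (hΔχ : |lap2 (cutoff R) x| ≤ M / R ^ 2) :
    |cutoffError v φ R x| ≤ 15 * A * B * M / R ^ 3 := by
  have hR0 : 0 < R := one_pos.trans_le hR
  have hA : 0 ≤ A := nonneg_of_mul_nonneg_left ((abs_nonneg _).trans hv_growth) (by positivity)
  have hB : 0 ≤ B := (by positivity : 0 ≤ ‖x‖ ^ 2 * |φ x|).trans hφ_decay
  have hM : 0 ≤ M := by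
    have := (abs_nonneg _).trans (hdχ 0)
    rwa [le_div_iff₀ hR0, zero_mul] at this
  rcases lt_or_ge ‖x‖ R with hxR | hRx
  · rw [cutoffError_eq_zero hR0 (Or.inl hxR), abs_zero]
    positivity
  have hv : |v x| ≤ 3 * A * R := hv_growth.trans (by nlinarith)
  have hφ : |φ x| ≤ B / R ^ 2 := by
    rw [le_div_iff₀ (by positivity), mul_comm]
    exact (mul_le_mul_of_nonneg_right (pow_le_pow_left₀ hR0.le hRx 2) (abs_nonneg _)).trans
      hφ_decay
  have hdφ (i : Fin 2) : |∂ i φ x| ≤ B / R ^ 3 := by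
    rw [le_div_iff₀ (by positivity), mul_comm]
    exact (mul_le_mul_of_nonneg_right (pow_le_pow_left₀ hR0.le hRx 3) (abs_nonneg _)).trans
      (hdφ_decay i)
  have hfactor : |2 * ∑ i, ∂ i (cutoff R) x * ∂ i φ x + φ x * lap2 (cutoff R) x| ≤
      5 * B * M / R ^ 4 :=
    calc _ ≤ 2 * ∑ i, |∂ i (cutoff R) x| * |∂ i φ x| + |φ x| * |lap2 (cutoff R) x| := by
          refine (abs_add_le _ _).trans ?_
          rw [abs_mul, abs_mul, abs_two]
          gcongr
          exact (Finset.abs_sum_le_sum_abs _ _).trans_eq (by simp only [abs_mul])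
      _ ≤ 2 * ∑ _i : Fin 2, M / R * (B / R ^ 3) + B / R ^ 2 * (M / R ^ 2) := by
          gcongr with i
          exacts [hdχ i, hdφ i]
      _ = 5 * B * M / R ^ 4 := by
          simp only [Finset.sum_const, Finset.card_univ, Fintype.card_fin, nsmul_eq_mul]
          field_simp
          ring
  calc |cutoffError v φ R x| ≤ 3 * A * R * (5 * B * M / R ^ 4) := by
        rw [cutoffError, abs_mul]
        gcongr
    _ = 15 * A * B * M / R ^ 3 := by
        field_simp
        ring

lemma tendsto_integral_cutoff_mul {G : ℝ² → ℝ} (hG : Integrable G) :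
    Tendsto (fun R => ∫ x, cutoff R x * G x) atTop (𝓝 (∫ x, G x)) := by
  refine tendsto_integral_filter_of_dominated_convergence (fun x => |G x|)
    (Eventually.of_forall fun R =>
      (contDiff_cutoff R).continuous.aestronglyMeasurable.mul hG.aestronglyMeasurable)
    (Eventually.of_forall fun R => Eventually.of_forall fun x => ?_) hG.abs
    (Eventually.of_forall fun x => tendsto_const_nhds.congr' ?_)
  · obtain ⟨h0, h1⟩ := cutoff_mem_Icc R x
    rw [Real.norm_eq_abs, abs_mul, abs_of_nonneg h0]
    exact mul_le_of_le_one_left (abs_nonneg _) h1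
  · filter_upwards [eventually_ge_atTop (max ‖x‖ 1)] with R hR
    rw [cutoff_eq_one (by linarith [le_max_right ‖x‖ 1]) (le_of_max_le_left hR), one_mul]

theorem integral_mul_lap2_sub_eq_zero (hv : ContDiff ℝ 2 v) (hφ : ContDiff ℝ 2 φ) {A B : ℝ}
    (hv_growth : ∀ x, |v x| ≤ A * (1 + ‖x‖)) (hφ_decay : ∀ x, ‖x‖ ^ 2 * |φ x| ≤ B)
    (hdφ_decay : ∀ i x, ‖x‖ ^ 3 * |∂ i φ x| ≤ B)
    (hint : Integrable fun x => φ x * lap2 v x - v x * lap2 φ x) :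
    ∫ x, (φ x * lap2 v x - v x * lap2 φ x) = 0 := by
  obtain ⟨M, hM⟩ := exists_bound_derivatives_cutoff
  have hsmall (R : ℝ) (hR : 1 ≤ R) :
      |∫ x, cutoff R x * (φ x * lap2 v x - v x * lap2 φ x)| ≤ 60 * π * A * B * M / R := by
    have hR0 : 0 < R := one_pos.trans_le hR
    rw [integral_cutoff_mul_green hv hφ hR0]
    refine (abs_integral_le_of_eq_zero_of_lt_norm (by positivity)
      (fun x hx => abs_cutoffError_le hR hx (hv_growth x) (hφ_decay x) (fun i => hdφ_decay i x)
        (hM R hR0 x).1 (hM R hR0 x).2)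
      (fun x hx => cutoffError_eq_zero hR0 (Or.inr hx))).trans_eq ?_
    field_simp
    ring
  refine tendsto_nhds_unique (tendsto_integral_cutoff_mul hint)
    (squeeze_zero_norm' (a := fun R => 60 * π * A * B * M / R) ?_
      (tendsto_const_nhds.div_atTop tendsto_id))
  filter_upwards [eventually_ge_atTop 1] with R hR
  exact hsmall R hR

end GreenDecay

noncomputable def Q2 (x : ℝ²) : ℝ := 1 + ‖x‖ ^ 2 / 8

/-- `phi - 1 = (8 - ‖x‖²) / (8 + ‖x‖²)` is the radial solution of `Δψ + e^U ψ = 0`; unlike it,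
`phi` decays at infinity, so it can be tested against `w₀` in Green's identity. -/
noncomputable def phi (x : ℝ²) : ℝ := 2 / Q2 x

section Bubble

variable (x : ℝ²)

lemma one_le_Q2 : 1 ≤ Q2 x :=
  le_add_of_nonneg_right (by positivity)

lemma Q2_pos : 0 < Q2 x := one_pos.trans_le (one_le_Q2 x)

lemma U2_eq : U2 x = -2 * log (Q2 x) := rfl

lemma exp_U2 : exp (U2 x) = 1 / Q2 x ^ 2 := by
  rw [U2_eq, mul_comm, exp_mul, exp_log (Q2_pos x), rpow_neg (Q2_pos x).le]
  norm_num

lemma norm_sq_le_Q2 : ‖x‖ ^ 2 ≤ 8 * Q2 x := by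
  unfold Q2; linarith

lemma one_add_norm_sq_le_Q2 : (1 + ‖x‖) ^ 2 ≤ 16 * Q2 x := by
  unfold Q2; nlinarith [sq_nonneg (‖x‖ - 1)]

lemma hasDerivAt_one_add_div_eight (s : ℝ) : HasDerivAt (fun s : ℝ => 1 + s / 8) (1 / 8) s :=
  ((hasDerivAt_id' s).div_const 8).const_add 1

lemma hasDerivAt_phi_profile (s : ℝ) (hs : 0 ≤ s) :
    HasDerivAt (fun s : ℝ => 2 / (1 + s / 8)) (-(1 / 4) / (1 + s / 8) ^ 2) s := by
  refine ((hasDerivAt_const s 2).fun_div (hasDerivAt_one_add_div_eight s)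
    (by positivity)).congr_deriv ?_
  ring

lemma hasDerivAt_phi_profile_deriv (s : ℝ) (hs : 0 ≤ s) :
    HasDerivAt (fun s : ℝ => -(1 / 4) / (1 + s / 8) ^ 2) ((1 / 16) / (1 + s / 8) ^ 3) s := by
  refine ((hasDerivAt_const s _).fun_div ((hasDerivAt_one_add_div_eight s).fun_pow 2)
    (by positivity)).congr_deriv ?_
  field_simp
  ring

lemma contDiff_phi : ContDiff ℝ 2 phi :=
  contDiff_const.div (contDiff_const.add ((contDiff_norm_sq ℝ).div_const 8))
    fun x => (Q2_pos x).ne'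

lemma partialDeriv_phi (i : Fin 2) : ∂ i phi x = -x i / (2 * Q2 x ^ 2) := by
  refine (partialDeriv_comp_norm_sq i (h := fun s => 2 / (1 + s / 8))
    (h' := fun s => -(1 / 4) / (1 + s / 8) ^ 2) (hasDerivAt_phi_profile _ (sq_nonneg ‖x‖))).trans ?_
  have hQ := (Q2_pos x).ne'
  unfold Q2 at hQ ⊢
  field_simp
  ring

lemma lap2_phi : lap2 phi x = exp (U2 x) * (1 - phi x) := by
  refine (lap2_comp_norm_sq (h := fun s => 2 / (1 + s / 8)) hasDerivAt_phi_profile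
    hasDerivAt_phi_profile_deriv).trans ?_
  have hQ := (Q2_pos x).ne'
  rw [exp_U2, phi]
  unfold Q2 at hQ ⊢
  field_simp
  ring

lemma norm_sq_mul_abs_phi_le : ‖x‖ ^ 2 * |phi x| ≤ 16 := by
  have hQ := Q2_pos x
  rw [phi, abs_of_pos (by positivity), mul_div_assoc', div_le_iff₀ hQ]
  linarith [norm_sq_le_Q2 x]

lemma norm_cube_mul_abs_partialDeriv_phi_le (i : Fin 2) : ‖x‖ ^ 3 * |∂ i phi x| ≤ 32 := by
  have hQ := Q2_pos x
  have hxi : |x i| ≤ ‖x‖ := by simpa using PiLp.norm_apply_le x i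
  have h4 : ‖x‖ ^ 4 ≤ 64 * Q2 x ^ 2 := by nlinarith [norm_sq_le_Q2 x, sq_nonneg ‖x‖]
  rw [partialDeriv_phi, abs_div, abs_neg, abs_of_pos (by positivity : 0 < 2 * Q2 x ^ 2),
    mul_div_assoc', div_le_iff₀ (by positivity)]
  calc ‖x‖ ^ 3 * |x i| ≤ ‖x‖ ^ 3 * ‖x‖ := by gcongr
    _ = ‖x‖ ^ 4 := by ring
    _ ≤ 32 * (2 * Q2 x ^ 2) := by linarith

end Bubble

section RadialIntegrals

lemma integral_fun_norm (f : ℝ → ℝ) : ∫ x : ℝ², f ‖x‖ = 2 * π * ∫ r in Ioi 0, r * f r := by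
  rw [integral_fun_norm_addHaar volume f]
  simp [Measure.real, pi_nonneg, mul_assoc]

lemma integrable_fun_norm_iff {f : ℝ → ℝ} :
    Integrable (fun x : ℝ² => f ‖x‖) ↔ IntegrableOn (fun r => r * f r) (Ioi 0) := by
  rw [integrable_fun_norm_addHaar volume]
  simp

lemma tendsto_one_add_sq_div_eight_atTop : Tendsto (fun r : ℝ => 1 + r ^ 2 / 8) atTop atTop :=
  tendsto_atTop_add_const_left _ 1 ((tendsto_pow_atTop two_ne_zero).atTop_div_const (by norm_num))

/-- Substituting `u = Q2 x = 1 + r² / 8`, so that `r dr = 4 du`. -/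
lemma integrable_and_integral_comp_Q2 {k K : ℝ → ℝ} (hK : ∀ u, 1 ≤ u → HasDerivAt K (k u) u)
    (hk : ∀ u, 1 ≤ u → 0 ≤ k u) (hlim : Tendsto K atTop (𝓝 0)) :
    Integrable (fun x => k (Q2 x)) ∧ ∫ x, k (Q2 x) = -(8 * π * K 1) := by
  have hu (r : ℝ) : 1 ≤ 1 + r ^ 2 / 8 := le_add_of_nonneg_right (by positivity)
  have hH (r : ℝ) (_ : r ∈ Ici 0) :
      HasDerivAt (fun r => 4 * K (1 + r ^ 2 / 8)) (r * k (1 + r ^ 2 / 8)) r := by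
    have hinner : HasDerivAt (fun r : ℝ => 1 + r ^ 2 / 8) (r / 4) r :=
      (((hasDerivAt_pow 2 r).div_const 8).const_add 1).congr_deriv (by ring)
    exact (((hK _ (hu r)).comp r hinner).const_mul 4).congr_deriv (by ring)
  have hpos (r : ℝ) (hr : r ∈ Ioi 0) : 0 ≤ r * k (1 + r ^ 2 / 8) :=
    mul_nonneg (le_of_lt hr) (hk _ (hu r))
  have hHlim : Tendsto (fun r => 4 * K (1 + r ^ 2 / 8)) atTop (𝓝 0) := by
    simpa using (hlim.comp tendsto_one_add_sq_div_eight_atTop).const_mul 4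
  refine ⟨integrable_fun_norm_iff.mpr (integrableOn_Ioi_deriv_of_nonneg' hH hpos hHlim), ?_⟩
  refine (integral_fun_norm fun r => k (1 + r ^ 2 / 8)).trans ?_
  rw [integral_Ioi_of_hasDerivAt_of_nonneg' hH hpos hHlim]
  norm_num
  ring

end RadialIntegrals

noncomputable def source (x : ℝ²) : ℝ := U2 x ^ 2 / 2 * exp (U2 x)

section Source

lemma source_eq (x : ℝ²) : source x = 2 * log (Q2 x) ^ 2 / Q2 x ^ 2 := by
  rw [source, exp_U2, U2_eq]
  ring

lemma hasDerivAt_log_sq_div_sq_primitive {u : ℝ} (hu : 0 < u) :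
    HasDerivAt (fun u => -2 * (log u ^ 2 + 2 * log u + 2) / u) (2 * log u ^ 2 / u ^ 2) u := by
  have hL := hasDerivAt_log hu.ne'
  refine (((((hL.fun_pow 2).add (hL.const_mul 2)).add_const 2).const_mul (-2)).fun_div
    (hasDerivAt_id' u) hu.ne').congr_deriv ?_
  simp only [Pi.add_apply]
  field_simp
  ring

lemma hasDerivAt_log_sq_div_cube_primitive {u : ℝ} (hu : 0 < u) :
    HasDerivAt (fun u => -(2 * log u ^ 2 + 2 * log u + 1) / u ^ 2)
      (2 / u * (2 * log u ^ 2 / u ^ 2)) u := by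
  have hL := hasDerivAt_log hu.ne'
  refine (((((hL.fun_pow 2).const_mul 2).add (hL.const_mul 2)).add_const 1).neg.fun_div
    ((hasDerivAt_id' u).fun_pow 2) (by positivity)).congr_deriv ?_
  simp only [Pi.add_apply, Pi.neg_apply]
  field_simp
  ring

lemma tendsto_log_pow_div_atTop (n : ℕ) : Tendsto (fun u => log u ^ n / u) atTop (𝓝 0) := by
  simpa using tendsto_pow_log_div_mul_add_atTop 1 0 n one_ne_zero

lemma tendsto_log_sq_div_sq_primitive :
    Tendsto (fun u => -2 * (log u ^ 2 + 2 * log u + 2) / u) atTop (𝓝 0) := by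
  have h := ((tendsto_log_pow_div_atTop 2).add ((tendsto_log_pow_div_atTop 1).const_mul 2)).add
    ((tendsto_log_pow_div_atTop 0).const_mul 2) |>.const_mul (-2)
  simp only [mul_zero, add_zero] at h
  refine h.congr' (Eventually.of_forall fun u => ?_)
  simp only [pow_one, pow_zero]
  ring

lemma tendsto_log_sq_div_cube_primitive :
    Tendsto (fun u => -(2 * log u ^ 2 + 2 * log u + 1) / u ^ 2) atTop (𝓝 0) := by
  have h := ((((tendsto_log_pow_div_atTop 2).const_mul 2).add
    ((tendsto_log_pow_div_atTop 1).const_mul 2)).add (tendsto_log_pow_div_atTop 0)).neg.mul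
    (tendsto_log_pow_div_atTop 0)
  simp only [mul_zero, add_zero, neg_zero] at h
  refine h.congr' (Eventually.of_forall fun u => ?_)
  simp only [pow_one, pow_zero]
  ring

lemma integrable_and_integral_source : Integrable source ∧ ∫ x, source x = 32 * π := by
  have h := integrable_and_integral_comp_Q2 (fun u hu => hasDerivAt_log_sq_div_sq_primitive
    (one_pos.trans_le hu)) (fun u _ => by positivity) tendsto_log_sq_div_sq_primitive
  simp only [← source_eq] at h
  refine ⟨h.1, h.2.trans ?_⟩
  norm_num
  ring

lemma integrable_and_integral_phi_mul_source :
    Integrable (fun x => phi x * source x) ∧ ∫ x, phi x * source x = 8 * π := by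
  have h := integrable_and_integral_comp_Q2 (fun u hu => hasDerivAt_log_sq_div_cube_primitive
    (one_pos.trans_le hu)) (fun u hu => by have := one_pos.trans_le hu; positivity)
    tendsto_log_sq_div_cube_primitive
  have heq : (fun x => phi x * source x) = fun x => 2 / Q2 x * (2 * log (Q2 x) ^ 2 / Q2 x ^ 2) :=
    funext fun x => by rw [source_eq, phi]
  rw [heq]
  refine ⟨h.1, h.2.trans ?_⟩
  norm_num

end Source

lemma abs_le_mul_one_add_norm_of_le_rpow {v : ℝ² → ℝ} {C τ : ℝ} (hτ : τ ≤ 1)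
    (hv : ∀ x, |v x| ≤ C * (1 + ‖x‖) ^ τ) (x : ℝ²) : |v x| ≤ C * (1 + ‖x‖) := by
  have hC : 0 ≤ C := by simpa using (abs_nonneg _).trans (hv 0)
  refine (hv x).trans (mul_le_mul_of_nonneg_left ?_ hC)
  simpa using rpow_le_rpow_of_exponent_le (le_add_of_nonneg_right (norm_nonneg x)) hτ

lemma integrable_exp_U2_mul {v : ℝ² → ℝ} {A : ℝ} (hv : Continuous v)
    (hv_growth : ∀ x, |v x| ≤ A * (1 + ‖x‖)) : Integrable fun x => exp (U2 x) * v x := by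
  refine ((integrable_one_add_norm (E := ℝ²) (μ := volume) (r := 3) (by simp; norm_num)).const_mul
    (256 * A)).mono' ?_ (Eventually.of_forall fun x => ?_)
  · have hU : Continuous U2 :=
      continuous_const.mul ((by fun_prop : Continuous fun x : ℝ² => 1 + ‖x‖ ^ 2 / 8).log
        fun x => (Q2_pos x).ne')
    exact ((continuous_exp.comp hU).mul hv).aestronglyMeasurable
  have hQ := Q2_pos x
  have hn : 0 < 1 + ‖x‖ := by positivity
  have h4 : (1 + ‖x‖) ^ 4 ≤ 256 * Q2 x ^ 2 := by nlinarith [one_add_norm_sq_le_Q2 x]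
  rw [Real.norm_eq_abs, abs_mul, abs_of_pos (exp_pos _), exp_U2, rpow_neg hn.le,
    show (3 : ℝ) = (3 : ℕ) by norm_num, rpow_natCast]
  calc 1 / Q2 x ^ 2 * |v x| ≤ 1 / Q2 x ^ 2 * (A * (1 + ‖x‖)) := by gcongr; exact hv_growth x
    _ ≤ 256 * A * ((1 + ‖x‖) ^ 3)⁻¹ := by
      have hA : 0 ≤ A := nonneg_of_mul_nonneg_left ((abs_nonneg _).trans (hv_growth x)) hn
      rw [← div_eq_mul_inv, div_mul_eq_mul_div, one_mul, div_le_div_iff₀ (by positivity)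
        (by positivity)]
      nlinarith [mul_le_mul_of_nonneg_left h4 hA]

end LinearizedLiouville

open LinearizedLiouville in
theorem integral_laplacian_w0 (w₀ : EuclideanSpace ℝ (Fin 2) → ℝ) (hw : ContDiff ℝ 2 w₀)
    (C τ : ℝ) (hτ : τ ∈ Set.Ioo (0:ℝ) 1)
    (hbound : ∀ x : EuclideanSpace ℝ (Fin 2), |w₀ x| ≤ C * (1 + ‖x‖) ^ τ)
    (heq : ∀ x : EuclideanSpace ℝ (Fin 2),
      -lap2 w₀ x - Real.exp (U2 x) * w₀ x = -(U2 x ^ 2 / 2) * Real.exp (U2 x)) :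
    ∫ x : EuclideanSpace ℝ (Fin 2), lap2 w₀ x = 24 * π := by
  have hgrowth := abs_le_mul_one_add_norm_of_le_rpow hτ.2.le hbound
  have hlap (x) : lap2 w₀ x = source x - exp (U2 x) * w₀ x := by
    rw [source]; linarith [heq x]
  have hgreen (x) : phi x * lap2 w₀ x - w₀ x * lap2 phi x =
      phi x * source x - exp (U2 x) * w₀ x := by
    rw [hlap, lap2_phi]; ring
  obtain ⟨hS, hS_int⟩ := integrable_and_integral_source
  obtain ⟨hφS, hφS_int⟩ := integrable_and_integral_phi_mul_source
  have hEw := integrable_exp_U2_mul hw.continuous hgrowth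
  have hzero := integral_mul_lap2_sub_eq_zero hw contDiff_phi hgrowth
    (fun x => (norm_sq_mul_abs_phi_le x).trans (by norm_num))
    (fun i x => norm_cube_mul_abs_partialDeriv_phi_le x i)
    (by simp_rw [hgreen]; exact hφS.sub hEw)
  simp_rw [hgreen] at hzero
  rw [integral_sub hφS hEw, hφS_int] at hzero
  simp_rw [hlap]
  rw [integral_sub hS hEw, hS_int]
  linarith
end
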